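/- arXiv:1805.07418 — 4 statements merged into one kernel-verified Lean document; each statement's English description precedes it below -/
import Mathlib

section
/- (Regret of the future-peeking forecaster, equation (eq:lem 1)) In Procedure 2 with nonincreasing positive step sizes η₀ ≥ η₁ ≥ … ≥ η_T, define f̂*_t = argmin_{f ∈ F_p} Σ_{s=0}^{t} Δ_{f,s} for t = 0, 1, …, T. Then E[ Σ_{t=1}^T Δ(f̂*_t, x_t) ] ≤ inf_{f ∈ F_p} { Σ_{t=1}^T Δ(f, x_t) + h(f)/η_T } + (1/η_T)·(1 + ln Σ_{f ∈ F_p} e^{−h(f)}). -/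
open MeasureTheory ProbabilityTheory Real

noncomputable section

namespace SLPC

/-- A polygonal line in `ℝ^d`, with `segs` segments and `segs + 1` vertices. -/
structure PolyLine (d : ℕ) where
  segs : ℕ
  vertices : Fin (segs + 1) → EuclideanSpace ℝ (Fin d)

instance (d : ℕ) : Inhabited (PolyLine d) := ⟨⟨0, fun _ => 0⟩⟩

/-- The image (trace) of a polygonal line: the union of its segments. -/
def PolyLine.image {d : ℕ} (f : PolyLine d) : Set (EuclideanSpace ℝ (Fin d)) :=
  ⋃ i : Fin f.segs, segment ℝ (f.vertices i.castSucc) (f.vertices i.succ)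

/-- The length of a polygonal line: the sum of the lengths of its segments. -/
def PolyLine.length {d : ℕ} (f : PolyLine d) : ℝ :=
  ∑ i : Fin f.segs, dist (f.vertices i.castSucc) (f.vertices i.succ)

/-- `Δ(f, x) = inf_s ‖f(s) - x‖²`: the squared distance from `x` to the polygonal line `f`. -/
def sqLoss {d : ℕ} (f : PolyLine d) (x : EuclideanSpace ℝ (Fin d)) : ℝ :=
  (Metric.infDist x f.image) ^ 2

/-- The grid `Q_δ = B(0, √d·R) ∩ δℤ^d`. -/
def Qgrid (d : ℕ) (R δ : ℝ) : Set (EuclideanSpace ℝ (Fin d)) :=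
  {x | x ∈ Metric.closedBall (0 : EuclideanSpace ℝ (Fin d)) (Real.sqrt d * R) ∧
        ∀ i : Fin d, ∃ n : ℤ, x i = n * δ}

/-- `F_{k,L}`: polygonal lines with `k` segments, vertices in `Q_δ`, and length at most `L`. -/
def Fclass (d : ℕ) (R δ L : ℝ) (k : ℕ) : Set (PolyLine d) :=
  {f | f.segs = k ∧ (∀ i, f.vertices i ∈ Qgrid d R δ) ∧ f.length ≤ L}

/-- `F_p = ⋃_{k=1}^p F_{k,L}`. -/
def Fp (d p : ℕ) (R δ L : ℝ) : Set (PolyLine d) :=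
  ⋃ k ∈ Finset.Icc 1 p, Fclass d R δ L k

/-- `c₀ = d(2R+δ)²`, a uniform bound on the loss. -/
def c0 (d : ℕ) (R δ : ℝ) : ℝ := d * (2 * R + δ) ^ 2

/-- Volume of the unit Euclidean ball of `ℝ^d`. -/
def unitBallVol (d : ℕ) : ℝ :=
  (MeasureTheory.volume (Metric.ball (0 : EuclideanSpace ℝ (Fin d)) 1)).toReal

/-- `c₁ = ln(8pe·V_d) + 3d^{3/2} - d`. -/
def c1 (d p : ℕ) : ℝ :=
  Real.log (8 * p * Real.exp 1 * unitBallVol d) + 3 * (d : ℝ) ^ ((3 : ℝ) / 2) - d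

/-- `c₂ = ln 2/(δ√d) + d/δ`. -/
def c2 (d : ℕ) (δ : ℝ) : ℝ := Real.log 2 / (δ * Real.sqrt d) + d / δ

/-- `c₃ = d·ln(√d(2R+δ)/δ)`. -/
def c3 (d : ℕ) (R δ : ℝ) : ℝ := d * Real.log (Real.sqrt d * (2 * R + δ) / δ)

/-- The standard exponential distribution on `ℝ` (density `e^{-z} 1_{z>0}`). -/
def expMeasure : Measure ℝ :=
  MeasureTheory.volume.withDensity fun z =>
    ENNReal.ofReal (if 0 < z then Real.exp (-z) else 0)


/-- Cumulative perturbed loss used by Procedure 2: `∑_{s=0}^{t} Δ_{f,s}` where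
`Δ_{f,0} = (1/η₀)(h(f) - z_f)` and, for `s ≥ 1`,
`Δ_{f,s} = Δ(f, x_s) + (1/η_s - 1/η_{s-1})(h(f) - z_f)`. -/
def cumLoss2 {d : ℕ} (x : ℕ → EuclideanSpace ℝ (Fin d)) (h : PolyLine d → ℝ) (η : ℕ → ℝ)
    (zf : ℝ) (t : ℕ) (f : PolyLine d) : ℝ :=
  (1 / η 0) * (h f - zf) +
    ∑ s ∈ Finset.Icc 1 t, (sqLoss f (x s) + (1 / η s - 1 / η (s - 1)) * (h f - zf))

/-!
Be the leader: since `f̂*_t` minimises the perturbed cumulative loss up to time `t`, induction on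
`T` gives `∑_{s ≤ T} Δ_{f̂*_s,s} ≤ ∑_{s ≤ T} Δ_{g,s}` for every competitor `g`. In `Δ_{f,s}` the
perturbation `h(f) - z_f` carries the weight `1/η_s - 1/η_{s-1} ≥ 0`, and these weights telescope
to `1/η_T`. Hence, pathwise, the regret against `g` is at most `(h(g) + max_f (z_f - h(f))) / η_T`,
using `z_g ≥ 0`. In expectation, `max_f (z_f - h(f)) ≤ a + ∑_f (z_f - h(f) - a)₊` together with
`E (Z - c)₊ ≤ e^{-c}` for a standard exponential `Z` and the choice `a = ln ∑_f e^{-h(f)}` gives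
`E max_f (z_f - h(f)) ≤ 1 + a`.
-/
open Set Filter Topology

section ExponentialDistribution

def expDensity (u : ℝ) : ℝ := if 0 < u then exp (-u) else 0

lemma expDensity_nonneg (u : ℝ) : 0 ≤ expDensity u := by
  unfold expDensity; split <;> positivity

lemma measurable_expDensity : Measurable expDensity :=
  Measurable.ite measurableSet_Ioi (by fun_prop) measurable_const

lemma expMeasure_eq_withDensity :
    expMeasure = volume.withDensity fun u => ENNReal.ofReal (expDensity u) := rfl

lemma integrable_expMeasure_iff {g : ℝ → ℝ} :
    Integrable g expMeasure ↔ Integrable (fun u => expDensity u * g u) := by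
  rw [expMeasure_eq_withDensity, integrable_withDensity_iff_integrable_smul'
    measurable_expDensity.ennreal_ofReal (ae_of_all _ fun _ => ENNReal.ofReal_lt_top)]
  simp only [ENNReal.toReal_ofReal (expDensity_nonneg _), smul_eq_mul]

lemma integral_expMeasure (g : ℝ → ℝ) :
    ∫ u, g u ∂expMeasure = ∫ u, expDensity u * g u := by
  rw [expMeasure_eq_withDensity, integral_withDensity_eq_integral_toReal_smul
    measurable_expDensity.ennreal_ofReal (ae_of_all _ fun _ => ENNReal.ofReal_lt_top)]
  simp only [ENNReal.toReal_ofReal (expDensity_nonneg _), smul_eq_mul]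

lemma ae_nonneg_expMeasure : ∀ᵐ u ∂expMeasure, 0 ≤ u := by
  rw [expMeasure_eq_withDensity, ae_withDensity_iff measurable_expDensity.ennreal_ofReal]
  refine ae_of_all _ fun u hu => ?_
  by_contra hneg
  have : expDensity u = 0 := if_neg (not_lt.2 (not_le.1 hneg).le)
  exact hu (by simp [this])

lemma hasDerivAt_sub_add_one_mul_exp_neg (c u : ℝ) :
    HasDerivAt (fun u => -(u - c + 1) * exp (-u)) ((u - c) * exp (-u)) u :=
  ((((hasDerivAt_id' u).sub_const c).add_const 1).fun_neg.fun_mul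
    (hasDerivAt_neg u).exp).congr_deriv (by ring)

lemma tendsto_sub_add_one_mul_exp_neg (c : ℝ) :
    Tendsto (fun u => -(u - c + 1) * exp (-u)) atTop (𝓝 0) := by
  have h1 : Tendsto (fun u : ℝ => u * exp (-u)) atTop (𝓝 0) := by
    simpa using tendsto_pow_mul_exp_neg_atTop_nhds_zero 1
  have h2 := Real.tendsto_exp_neg_atTop_nhds_zero.const_mul (c - 1)
  convert h1.neg.add h2 using 1
  · ext u; ring
  · simp

variable {b c : ℝ}

lemma integrableOn_Ioi_sub_mul_exp_neg (hcb : c ≤ b) :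
    IntegrableOn (fun u => (u - c) * exp (-u)) (Ioi b) :=
  integrableOn_Ioi_deriv_of_nonneg' (fun u _ => hasDerivAt_sub_add_one_mul_exp_neg c u)
    (fun u hu => mul_nonneg (by linarith [mem_Ioi.1 hu]) (exp_pos _).le)
    (tendsto_sub_add_one_mul_exp_neg c)

lemma integral_Ioi_sub_mul_exp_neg (hcb : c ≤ b) :
    ∫ u in Ioi b, (u - c) * exp (-u) = (b - c + 1) * exp (-b) := by
  rw [integral_Ioi_of_hasDerivAt_of_nonneg' (fun u _ => hasDerivAt_sub_add_one_mul_exp_neg c u)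
    (fun u hu => mul_nonneg (by linarith [mem_Ioi.1 hu]) (exp_pos _).le)
    (tendsto_sub_add_one_mul_exp_neg c)]
  ring

lemma expDensity_mul_posPart_sub (c u : ℝ) :
    expDensity u * max (u - c) 0 = (Ioi (max c 0)).indicator (fun u => (u - c) * exp (-u)) u := by
  unfold expDensity indicator
  by_cases hu : 0 < u <;> by_cases hcu : c < u
  all_goals simp only [hu, hcu, if_true, if_false, mem_Ioi, max_lt_iff, and_true, and_false]
  · rw [max_eq_left (sub_pos.2 hcu).le, mul_comm]
  · rw [max_eq_right (by linarith), mul_zero]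
  all_goals exact zero_mul _

lemma integrable_posPart_sub_expMeasure (c : ℝ) :
    Integrable (fun u => max (u - c) 0) expMeasure := by
  rw [integrable_expMeasure_iff]
  simp_rw [expDensity_mul_posPart_sub c]
  exact (integrable_indicator_iff measurableSet_Ioi).2
    (integrableOn_Ioi_sub_mul_exp_neg (le_max_left c 0))

lemma integral_posPart_sub_expMeasure_le (c : ℝ) :
    ∫ u, max (u - c) 0 ∂expMeasure ≤ exp (-c) := by
  rw [integral_expMeasure]
  simp_rw [expDensity_mul_posPart_sub c]
  rw [integral_indicator measurableSet_Ioi, integral_Ioi_sub_mul_exp_neg (le_max_left c 0)]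
  rcases le_total c 0 with hc | hc
  · rw [max_eq_right hc]
    simpa [add_comm] using add_one_le_exp (-c)
  · simp [max_eq_left hc]

end ExponentialDistribution

lemma mul_exp_neg_log_le_one {x : ℝ} (hx : 0 ≤ x) : x * exp (-log x) ≤ 1 := by
  rcases hx.eq_or_lt with rfl | hx
  · simp
  · rw [exp_neg, exp_log hx, mul_inv_cancel₀ hx.ne']

section RandomVariable

variable {Ω : Type*} [MeasurableSpace Ω] {P : Measure Ω} {Z : Ω → ℝ}

lemma ae_nonneg_of_map_eq_expMeasure (hZ : Measurable Z) (hmap : P.map Z = expMeasure) :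
    ∀ᵐ ω ∂P, 0 ≤ Z ω :=
  ae_of_ae_map hZ.aemeasurable (hmap ▸ ae_nonneg_expMeasure)

lemma measurable_posPart_sub (c : ℝ) : Measurable fun u : ℝ => max (u - c) 0 := by
  fun_prop

lemma integrable_posPart_sub_of_map_eq_expMeasure (hZ : Measurable Z)
    (hmap : P.map Z = expMeasure) (c : ℝ) : Integrable (fun ω => max (Z ω - c) 0) P :=
  (integrable_map_measure (measurable_posPart_sub c).aestronglyMeasurable hZ.aemeasurable).1
    (hmap ▸ integrable_posPart_sub_expMeasure c)

lemma integral_posPart_sub_le_of_map_eq_expMeasure (hZ : Measurable Z)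
    (hmap : P.map Z = expMeasure) (c : ℝ) : ∫ ω, max (Z ω - c) 0 ∂P ≤ exp (-c) := by
  rw [← integral_map hZ.aemeasurable (measurable_posPart_sub c).aestronglyMeasurable, hmap]
  exact integral_posPart_sub_expMeasure_le c

lemma integral_le_add_mul_integral [IsProbabilityMeasure P] {X M : Ω → ℝ} {c k : ℝ}
    (hX : Integrable X P) (hM : Integrable M P)
    (hle : ∀ᵐ ω ∂P, X ω ≤ c + k * M ω) : ∫ ω, X ω ∂P ≤ c + k * ∫ ω, M ω ∂P := by
  calc ∫ ω, X ω ∂P ≤ ∫ ω, c + k * M ω ∂P :=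
        integral_mono_ae hX ((integrable_const c).add (hM.const_mul k)) hle
    _ = c + k * ∫ ω, M ω ∂P := by
        rw [integral_add (integrable_const c) (hM.const_mul k), integral_const,
          integral_const_mul, probReal_univ, one_smul]

lemma le_add_sum_posPart_sub {ι : Type*} {S : Finset ι} (y : ι → ℝ) (a : ℝ) {i : ι}
    (hi : i ∈ S) : y i ≤ a + ∑ j ∈ S, max (y j - a) 0 := by
  have hsingle := Finset.single_le_sum (f := fun j => max (y j - a) 0)
    (fun j _ => le_max_right _ _) hi
  linarith [le_max_left (y i - a) 0]

lemma exists_integrable_forall_sub_le_integral_le [IsProbabilityMeasure P] {ι : Type*}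
    (S : Finset ι) (z : ι → Ω → ℝ) (h : ι → ℝ) (hzmeas : ∀ i ∈ S, Measurable (z i))
    (hzdist : ∀ i ∈ S, P.map (z i) = expMeasure) :
    ∃ M : Ω → ℝ, Integrable M P ∧ (∀ ω, ∀ i ∈ S, z i ω - h i ≤ M ω) ∧
      ∫ ω, M ω ∂P ≤ 1 + log (∑ i ∈ S, exp (-h i)) := by
  set a := log (∑ i ∈ S, exp (-h i))
  have hint : ∀ i ∈ S, Integrable (fun ω => max (z i ω - h i - a) 0) P := fun i hi => by
    simpa only [sub_sub] using
      integrable_posPart_sub_of_map_eq_expMeasure (hzmeas i hi) (hzdist i hi) (h i + a)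
  refine ⟨fun ω => a + ∑ i ∈ S, max (z i ω - h i - a) 0,
    (integrable_const a).add (integrable_finsetSum S hint),
    fun ω i hi => le_add_sum_posPart_sub (fun i => z i ω - h i) a hi, ?_⟩
  calc ∫ ω, a + ∑ i ∈ S, max (z i ω - h i - a) 0 ∂P
      = a + ∑ i ∈ S, ∫ ω, max (z i ω - (h i + a)) 0 ∂P := by
        rw [integral_add (integrable_const a) (integrable_finsetSum S hint),
          integral_finsetSum S hint]
        simp [sub_sub]
    _ ≤ a + ∑ i ∈ S, exp (-(h i + a)) := by
        gcongr with i hi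
        exact integral_posPart_sub_le_of_map_eq_expMeasure (hzmeas i hi) (hzdist i hi) _
    _ = a + (∑ i ∈ S, exp (-h i)) * exp (-a) := by
        simp_rw [neg_add, exp_add, Finset.sum_mul]
    _ ≤ 1 + a := by
        linarith [mul_exp_neg_log_le_one
          (Finset.sum_nonneg fun i (_ : i ∈ S) => (exp_pos (-h i)).le)]

end RandomVariable

lemma sum_range_le_of_isMinOn {α : Type*} (ℓ : ℕ → α → ℝ) {S : Set α} {f : ℕ → α} {T : ℕ}
    (hf : ∀ t ≤ T, f t ∈ S)
    (hmin : ∀ t ≤ T, IsMinOn (fun g => ∑ s ∈ Finset.range (t + 1), ℓ s g) S (f t)) :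
    ∀ g ∈ S, ∑ s ∈ Finset.range (T + 1), ℓ s (f s) ≤ ∑ s ∈ Finset.range (T + 1), ℓ s g := by
  induction T with
  | zero => exact isMinOn_iff.1 (hmin 0 le_rfl)
  | succ T ih =>
    intro g hg
    have hlead := ih (fun t ht => hf t (by omega)) (fun t ht => hmin t (by omega))
      (f (T + 1)) (hf (T + 1) le_rfl)
    calc ∑ s ∈ Finset.range (T + 2), ℓ s (f s)
        = ∑ s ∈ Finset.range (T + 1), ℓ s (f s) + ℓ (T + 1) (f (T + 1)) :=
          Finset.sum_range_succ _ _
      _ ≤ ∑ s ∈ Finset.range (T + 1), ℓ s (f (T + 1)) + ℓ (T + 1) (f (T + 1)) := by gcongr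
      _ = ∑ s ∈ Finset.range (T + 2), ℓ s (f (T + 1)) := (Finset.sum_range_succ _ _).symm
      _ ≤ ∑ s ∈ Finset.range (T + 2), ℓ s g := isMinOn_iff.1 (hmin (T + 1) le_rfl) g hg

def perturbationWeight (η : ℕ → ℝ) (s : ℕ) : ℝ :=
  if s = 0 then 1 / η 0 else 1 / η s - 1 / η (s - 1)

lemma sum_range_perturbationWeight (η : ℕ → ℝ) (t : ℕ) :
    ∑ s ∈ Finset.range (t + 1), perturbationWeight η s = 1 / η t := by
  induction t with
  | zero => simp [perturbationWeight]
  | succ t ih =>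
    rw [Finset.sum_range_succ, ih]
    simp [perturbationWeight]

lemma perturbationWeight_nonneg {η : ℕ → ℝ} {T s : ℕ} (hηpos : ∀ t ≤ T, 0 < η t)
    (hηanti : AntitoneOn η (Iic T)) (hs : s ≤ T) : 0 ≤ perturbationWeight η s := by
  unfold perturbationWeight
  split_ifs with hs0
  · exact (one_div_pos.2 (hηpos 0 (Nat.zero_le T))).le
  · exact sub_nonneg.2 (one_div_le_one_div_of_le (hηpos s hs)
      (hηanti (mem_Iic.2 (by omega)) (mem_Iic.2 hs) (Nat.sub_le s 1)))

section PerturbedLoss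

variable {d : ℕ} (x : ℕ → EuclideanSpace ℝ (Fin d)) (h : PolyLine d → ℝ) (η : ℕ → ℝ)

/-- The paper's `Δ_{f,s}` for the perturbation `z_f = zf`. -/
def perturbedLoss (zf : ℝ) (s : ℕ) (f : PolyLine d) : ℝ :=
  (if s = 0 then 0 else sqLoss f (x s)) + perturbationWeight η s * (h f - zf)

lemma cumLoss2_eq_sum_range (zf : ℝ) (t : ℕ) (f : PolyLine d) :
    cumLoss2 x h η zf t f = ∑ s ∈ Finset.range (t + 1), perturbedLoss x h η zf s f := by
  induction t with
  | zero => simp [cumLoss2, perturbedLoss, perturbationWeight]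
  | succ t ih =>
    rw [Finset.sum_range_succ, ← ih, cumLoss2, cumLoss2,
      Finset.sum_Icc_succ_top (Nat.le_add_left 1 t), perturbedLoss, perturbationWeight,
      if_neg t.succ_ne_zero, if_neg t.succ_ne_zero, Nat.add_sub_cancel]
    ring

lemma sum_range_perturbedLoss (w : PolyLine d → ℝ) (f : ℕ → PolyLine d) (t : ℕ) :
    ∑ s ∈ Finset.range (t + 1), perturbedLoss x h η (w (f s)) s (f s) =
      ∑ s ∈ Finset.Icc 1 t, sqLoss (f s) (x s) +
        ∑ s ∈ Finset.range (t + 1), perturbationWeight η s * (h (f s) - w (f s)) := by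
  induction t with
  | zero => simp [perturbedLoss]
  | succ t ih =>
    rw [Finset.sum_range_succ, ih, Finset.sum_Icc_succ_top (Nat.le_add_left 1 t),
      Finset.sum_range_succ _ (t + 1), perturbedLoss, if_neg t.succ_ne_zero]
    ring

lemma cumLoss2_eq_sum_sqLoss_add (zf : ℝ) (t : ℕ) (f : PolyLine d) :
    cumLoss2 x h η zf t f = ∑ s ∈ Finset.Icc 1 t, sqLoss f (x s) + (h f - zf) / η t := by
  rw [cumLoss2_eq_sum_range, sum_range_perturbedLoss x h η (fun _ => zf) (fun _ => f),
    ← Finset.sum_mul, sum_range_perturbationWeight]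
  ring

variable {x h η}

lemma sum_sqLoss_le_of_isMinOn_cumLoss2 {S : Set (PolyLine d)} {w : PolyLine d → ℝ}
    {f : ℕ → PolyLine d} {T : ℕ} {M : ℝ} (hηpos : ∀ t ≤ T, 0 < η t)
    (hηanti : AntitoneOn η (Iic T)) (hf : ∀ t ≤ T, f t ∈ S)
    (hmin : ∀ t ≤ T, IsMinOn (fun g => cumLoss2 x h η (w g) t g) S (f t))
    (hM : ∀ g ∈ S, w g - h g ≤ M) {g : PolyLine d} (hg : g ∈ S) :
    ∑ t ∈ Finset.Icc 1 T, sqLoss (f t) (x t) ≤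
      ∑ t ∈ Finset.Icc 1 T, sqLoss g (x t) + (h g - w g + M) / η T := by
  have hlead := sum_range_le_of_isMinOn (fun s g => perturbedLoss x h η (w g) s g) hf
    (by simpa only [cumLoss2_eq_sum_range] using hmin) g hg
  rw [sum_range_perturbedLoss, ← cumLoss2_eq_sum_range, cumLoss2_eq_sum_sqLoss_add] at hlead
  have hweights : -(M / η T) ≤
      ∑ s ∈ Finset.range (T + 1), perturbationWeight η s * (h (f s) - w (f s)) :=
    calc -(M / η T) = ∑ s ∈ Finset.range (T + 1), perturbationWeight η s * -M := by
          rw [← Finset.sum_mul, sum_range_perturbationWeight]; ring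
      _ ≤ _ := Finset.sum_le_sum fun s hs => by
          have hsT : s ≤ T := Nat.lt_succ_iff.1 (Finset.mem_range.1 hs)
          exact mul_le_mul_of_nonneg_left (by linarith [hM (f s) (hf s hsT)])
            (perturbationWeight_nonneg hηpos hηanti hsT)
  rw [add_div]
  linarith

end PerturbedLoss

theorem regret_future_peeking_general
    (d p T : ℕ) (R δ L : ℝ)
    (x : ℕ → EuclideanSpace ℝ (Fin d))
    (hfin : (Fp d p R δ L).Finite)
    (h : PolyLine d → ℝ)
    (η : ℕ → ℝ) (hηpos : ∀ t, t ≤ T → 0 < η t)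
    (hηmono : ∀ s t : ℕ, s ≤ t → t ≤ T → η t ≤ η s)
    (Ω : Type*) [MeasurableSpace Ω] (P : Measure Ω) [IsProbabilityMeasure P]
    (z : PolyLine d → Ω → ℝ)
    (hzmeas : ∀ f, Measurable (z f))
    (hzdist : ∀ f ∈ Fp d p R δ L, Measure.map (z f) P = expMeasure)
    (fstar : ℕ → Ω → PolyLine d)
    (hmem : ∀ t, t ≤ T → ∀ ω, fstar t ω ∈ Fp d p R δ L)
    (hargmin : ∀ t, t ≤ T → ∀ ω, ∀ g ∈ Fp d p R δ L,
      cumLoss2 x h η (z (fstar t ω) ω) t (fstar t ω) ≤ cumLoss2 x h η (z g ω) t g)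
    (hint : ∀ t ∈ Finset.Icc 1 T, Integrable (fun ω => sqLoss (fstar t ω) (x t)) P) :
    ∑ t ∈ Finset.Icc 1 T, ∫ ω, sqLoss (fstar t ω) (x t) ∂P
      ≤ sInf {v : ℝ | ∃ f ∈ Fp d p R δ L,
            v = (∑ t ∈ Finset.Icc 1 T, sqLoss f (x t)) + h f / η T}
        + (1 / η T) * (1 + Real.log (∑ f ∈ hfin.toFinset, Real.exp (-(h f)))) := by
  obtain ⟨M, hMint, hMge, hMle⟩ := exists_integrable_forall_sub_le_integral_le hfin.toFinset z h
    (fun f _ => hzmeas f) (fun f hf => hzdist f (hfin.mem_toFinset.1 hf))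
  have hηT : 0 < η T := hηpos T le_rfl
  have hpath : ∀ g ∈ Fp d p R δ L, ∀ ω, 0 ≤ z g ω →
      ∑ t ∈ Finset.Icc 1 T, sqLoss (fstar t ω) (x t) ≤
        (∑ t ∈ Finset.Icc 1 T, sqLoss g (x t) + h g / η T) + 1 / η T * M ω := by
    intro g hg ω hzg
    have hleader := sum_sqLoss_le_of_isMinOn_cumLoss2 hηpos
      (fun s _ t ht hst => hηmono s t hst ht) (fun t ht => hmem t ht ω)
      (fun t ht => isMinOn_iff.2 (hargmin t ht ω))
      (fun f hf => hMge ω f (hfin.mem_toFinset.2 hf)) hg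
    have hpen : (h g - z g ω + M ω) / η T ≤ h g / η T + 1 / η T * M ω := by
      rw [one_div_mul_eq_div, ← add_div]
      exact div_le_div_of_nonneg_right (by linarith) hηT.le
    linarith
  have hregret : ∀ g ∈ Fp d p R δ L, ∑ t ∈ Finset.Icc 1 T, ∫ ω, sqLoss (fstar t ω) (x t) ∂P ≤
      (∑ t ∈ Finset.Icc 1 T, sqLoss g (x t) + h g / η T) +
        1 / η T * (1 + log (∑ f ∈ hfin.toFinset, exp (-h f))) := fun g hg =>
    calc _ = ∫ ω, ∑ t ∈ Finset.Icc 1 T, sqLoss (fstar t ω) (x t) ∂P :=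
          (integral_finsetSum _ hint).symm
      _ ≤ (∑ t ∈ Finset.Icc 1 T, sqLoss g (x t) + h g / η T) + 1 / η T * ∫ ω, M ω ∂P :=
          integral_le_add_mul_integral (integrable_finsetSum _ hint) hMint
            (by filter_upwards [ae_nonneg_of_map_eq_expMeasure (hzmeas g) (hzdist g hg)]
                  with ω hω using hpath g hg ω hω)
      _ ≤ _ := by gcongr
  rw [← sub_le_iff_le_add]
  refine le_csInf ⟨_, _, hmem 0 (Nat.zero_le T) (nonempty_of_isProbabilityMeasure P).some, rfl⟩ ?_
  rintro _ ⟨g, hg, rfl⟩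
  exact sub_le_iff_le_add.2 (hregret g hg)

/-- **Regret of the future-peeking forecaster** (equation (eq:lem 1)). -/
theorem regret_future_peeking
    (d p T : ℕ) (hd : 1 ≤ d) (hp : 1 ≤ p) (hT : 1 ≤ T)
    (R δ L : ℝ) (hR : 0 < R) (hδ : 0 < δ) (hL : 0 < L)
    (x : ℕ → EuclideanSpace ℝ (Fin d))
    (hx : ∀ t ∈ Finset.Icc 1 T,
      x t ∈ Metric.closedBall (0 : EuclideanSpace ℝ (Fin d)) (Real.sqrt d * R))
    (hfin : (Fp d p R δ L).Finite)
    (h : PolyLine d → ℝ) (hh : ∀ f ∈ Fp d p R δ L, 0 ≤ h f)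
    (η : ℕ → ℝ) (hηpos : ∀ t, t ≤ T → 0 < η t)
    (hηmono : ∀ s t : ℕ, s ≤ t → t ≤ T → η t ≤ η s)
    (Ω : Type*) [MeasurableSpace Ω] (P : Measure Ω) [IsProbabilityMeasure P]
    (z : PolyLine d → Ω → ℝ)
    (hzmeas : ∀ f, Measurable (z f))
    (hzdist : ∀ f ∈ Fp d p R δ L, Measure.map (z f) P = expMeasure)
    (hzindep : iIndepFun
      (fun f : (Fp d p R δ L) => z f.1) P)
    (fstar : ℕ → Ω → PolyLine d)
    (hmem : ∀ t, t ≤ T → ∀ ω, fstar t ω ∈ Fp d p R δ L)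
    (hargmin : ∀ t, t ≤ T → ∀ ω, ∀ g ∈ Fp d p R δ L,
      cumLoss2 x h η (z (fstar t ω) ω) t (fstar t ω) ≤ cumLoss2 x h η (z g ω) t g)
    (hfmeas : ∀ t f, MeasurableSet {ω | fstar t ω = f})
    (hint : ∀ t ∈ Finset.Icc 1 T, Integrable (fun ω => sqLoss (fstar t ω) (x t)) P) :
    ∑ t ∈ Finset.Icc 1 T, ∫ ω, sqLoss (fstar t ω) (x t) ∂P
      ≤ sInf {v : ℝ | ∃ f ∈ Fp d p R δ L,
            v = (∑ t ∈ Finset.Icc 1 T, sqLoss f (x t)) + h f / η T}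
        + (1 / η T) * (1 + Real.log (∑ f ∈ hfin.toFinset, Real.exp (-(h f)))) :=
  regret_future_peeking_general d p T R δ L x hfin h η hηpos hηmono Ω P z hzmeas hzdist fstar hmem
    hargmin hint

end SLPC
end
end

section
/- (Lemma 3) For every k ∈ {1,…,p}, the number of polygonal lines in F_p with exactly k segments satisfies ln |{f ∈ F_p : K(f) = k}| ≤ (ln(8p·e·V_d) + 3d^{3/2} − d)·k + ((ln 2)/(δ√d) + d/δ)·L + d·ln(√d(2R+δ)/δ), where V_d denotes the volume of the unit Euclidean ball in ℝ^d; that is, ln |{f ∈ F_p : K(f) = k}| ≤ c₁k + c₂L + c₃ with c₁ = ln(8p·e·V_d) + 3d^{3/2} − d, c₂ = (ln 2)/(δ√d) + d/δ, c₃ = d·ln(√d(2R+δ)/δ). -/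
open MeasureTheory ProbabilityTheory Real

noncomputable section

namespace SLPC

/-!
A polygonal line of `F_{k,L}` is determined by the lattice coordinates of its first vertex,
which lie in the box `[-N, N]^d` with `N = ⌊√d R/δ⌋`, and by its `kd` integer increments, whose
`ℓ¹`-norm is at most `M = ⌊√d L/δ⌋` because `‖·‖₁ ≤ √d ‖·‖₂`. Weighting each lattice point `w`
of the `ℓ¹`-ball of radius `M` in `ℤ^n` by `2^(M - ‖w‖₁) ≥ 1` and summing a geometric series in
each coordinate shows that there are at most `2^M 3^n` of them. After taking logarithms, the box
contributes at most `c₃`, the factor `2^M` at most `c₂ L`, and `3^(kd)` at most `c₁ k`; the last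
bound uses `V_d ≥ (2/√d)^d`, the volume of the cube inscribed in the unit ball.
-/

open Finset

section LatticeCount

variable (ι : Type*) [Fintype ι] [DecidableEq ι]

def l1Ball (M : ℕ) : Finset (ι → ℤ) :=
  {w ∈ Fintype.piFinset fun _ => Icc (-(M : ℤ)) M | ∑ i, (w i).natAbs ≤ M}

variable {ι} in
theorem mem_l1Ball {M : ℕ} {w : ι → ℤ} : w ∈ l1Ball ι M ↔ ∑ i, (w i).natAbs ≤ M := by
  refine ⟨fun h => (mem_filter.mp h).2, fun h => mem_filter.mpr ⟨?_, h⟩⟩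
  refine Fintype.mem_piFinset.mpr fun i => ?_
  have := (single_le_sum (fun j _ => Nat.zero_le _) (mem_univ i)).trans h
  exact mem_Icc.mpr ⟨by omega, by omega⟩

theorem sum_Icc_half_pow_natAbs (M : ℕ) :
    ∑ c ∈ Icc (-(M : ℤ)) M, (1 / 2 : ℝ) ^ c.natAbs = 3 - 2 * (1 / 2) ^ M := by
  induction M with
  | zero => norm_num
  | succ M ih =>
    have hIcc : Icc (-((M + 1 : ℕ) : ℤ)) (M + 1 : ℕ)
        = insert (-((M + 1 : ℕ) : ℤ)) (insert ((M + 1 : ℕ) : ℤ) (Icc (-(M : ℤ)) M)) := by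
      ext c; simp only [mem_Icc, mem_insert]; omega
    rw [hIcc, sum_insert (by simp only [mem_insert, mem_Icc]; omega),
      sum_insert (by simp only [mem_Icc]; omega), ih]
    simp only [Int.natAbs_neg, Int.natAbs_natCast, pow_succ]
    ring

theorem card_l1Ball_le (M : ℕ) : #(l1Ball ι M) ≤ 2 ^ M * 3 ^ Fintype.card ι := by
  set box := Fintype.piFinset fun _ : ι => Icc (-(M : ℤ)) M
  let weight : (ι → ℤ) → ℝ := fun w => 2 ^ M * ∏ i, (1 / 2 : ℝ) ^ (w i).natAbs
  have one_le_weight : ∀ w ∈ l1Ball ι M, (1 : ℝ) ≤ weight w := fun w hw => by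
    have hsum : (1 / 2 : ℝ) ^ M ≤ (1 / 2) ^ ∑ i, (w i).natAbs :=
      pow_le_pow_of_le_one (by norm_num) (by norm_num) (mem_l1Ball.mp hw)
    simp only [weight, prod_pow_eq_pow_sum]
    calc (1 : ℝ) = 2 ^ M * (1 / 2) ^ M := by rw [← mul_pow]; norm_num
      _ ≤ _ := by gcongr
  have : (#(l1Ball ι M) : ℝ) ≤ 2 ^ M * 3 ^ Fintype.card ι :=
    calc (#(l1Ball ι M) : ℝ) ≤ ∑ w ∈ l1Ball ι M, weight w := by
          simpa using sum_le_sum one_le_weight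
      _ ≤ ∑ w ∈ box, weight w :=
          sum_le_sum_of_subset_of_nonneg (filter_subset _ _) fun _ _ _ => by positivity
      _ = 2 ^ M * ∏ _i : ι, ∑ c ∈ Icc (-(M : ℤ)) M, (1 / 2 : ℝ) ^ c.natAbs := by
          rw [← mul_sum, prod_univ_sum]
      _ ≤ 2 ^ M * ∏ _i : ι, (3 : ℝ) := by
          gcongr with i
          rw [sum_Icc_half_pow_natAbs]
          linarith [pow_pos (by norm_num : (0 : ℝ) < 1 / 2) M]
      _ = 2 ^ M * 3 ^ Fintype.card ι := by rw [prod_const, card_univ]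
  exact_mod_cast this

end LatticeCount

section Euclidean

variable {ι : Type*} [Fintype ι]

theorem sum_abs_le_sqrt_card_mul_norm (x : EuclideanSpace ℝ ι) :
    ∑ i, |x i| ≤ √(Fintype.card ι) * ‖x‖ := by
  rw [← Real.sqrt_sq (norm_nonneg x), ← Real.sqrt_mul (Nat.cast_nonneg _)]
  refine Real.le_sqrt_of_sq_le ?_
  calc (∑ i, |x i|) ^ 2 ≤ #univ * ∑ i, |x i| ^ 2 := sq_sum_le_card_mul_sum_sq
    _ = Fintype.card ι * ‖x‖ ^ 2 := by simp [EuclideanSpace.norm_sq_eq]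

theorem norm_le_sqrt_card_mul_norm_ofLp (x : EuclideanSpace ℝ ι) :
    ‖x‖ ≤ √(Fintype.card ι) * ‖WithLp.ofLp x‖ := by
  rw [← Real.sqrt_sq (norm_nonneg (WithLp.ofLp x)), ← Real.sqrt_mul (Nat.cast_nonneg _),
    EuclideanSpace.norm_eq]
  refine Real.sqrt_le_sqrt ?_
  calc ∑ i, ‖x i‖ ^ 2 ≤ ∑ _i : ι, ‖WithLp.ofLp x‖ ^ 2 := by
        gcongr with i; exact norm_le_pi_norm (WithLp.ofLp x) i
    _ = _ := by simp

theorem volume_ball_pi_le_volume_ball [Nonempty ι] (r : ℝ) :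
    volume (Metric.ball (0 : ι → ℝ) r)
      ≤ volume (Metric.ball (0 : EuclideanSpace ℝ ι) (√(Fintype.card ι) * r)) := by
  rw [← (PiLp.volume_preserving_ofLp ι).measure_preimage measurableSet_ball.nullMeasurableSet]
  refine measure_mono fun x hx => ?_
  rw [Set.mem_preimage, mem_ball_zero_iff] at hx
  rw [mem_ball_zero_iff]
  have : 0 < √(Fintype.card ι : ℝ) := Real.sqrt_pos.mpr (by exact_mod_cast Fintype.card_pos)
  exact (norm_le_sqrt_card_mul_norm_ofLp x).trans_lt (by gcongr)

theorem two_div_sqrt_pow_le_unitBallVol {d : ℕ} (hd : 1 ≤ d) :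
    (2 / √d) ^ d ≤ unitBallVol d := by
  have : Nonempty (Fin d) := ⟨⟨0, hd⟩⟩
  have hsqrt : 0 < √(d : ℝ) := Real.sqrt_pos.mpr (by exact_mod_cast hd)
  have hball := volume_ball_pi_le_volume_ball (ι := Fin d) (1 / √d)
  rw [Real.volume_pi_ball _ (by positivity), Fintype.card_fin,
    mul_one_div_cancel hsqrt.ne'] at hball
  rw [unitBallVol, ← ENNReal.toReal_ofReal (by positivity : (0 : ℝ) ≤ (2 / √d) ^ d)]
  convert ENNReal.toReal_mono measure_ball_lt_top.ne hball using 3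
  ring

end Euclidean

section Constants

variable {d : ℕ}

theorem mul_log_three_le_c1 {p : ℕ} (hd : 1 ≤ d) (hp : 1 ≤ p) : d * log 3 ≤ c1 d p := by
  have hd' : (1 : ℝ) ≤ d := by exact_mod_cast hd
  have hsqrt : 1 ≤ √(d : ℝ) := Real.one_le_sqrt.mpr hd'
  have hvol := two_div_sqrt_pow_le_unitBallVol hd
  have hlog_vol : -(d * (√d - 1)) ≤ log (unitBallVol d) :=
    calc -(d * (√d - 1)) ≤ d * (log 2 - log √d) := by
          have := Real.log_le_sub_one_of_pos (by positivity : 0 < √(d : ℝ))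
          nlinarith [Real.log_nonneg (by norm_num : (1 : ℝ) ≤ 2)]
      _ = log ((2 / √d) ^ d) := by rw [Real.log_pow, Real.log_div two_ne_zero (by positivity)]
      _ ≤ log (unitBallVol d) := Real.log_le_log (by positivity) hvol
  have hlog_8p : 0 ≤ log (8 * p) := Real.log_nonneg (by norm_cast; omega)
  have hlog_three : log 3 ≤ 2 := by
    rw [Real.log_le_iff_le_exp (by norm_num)]
    linarith [Real.add_one_le_exp 2]
  have hrpow : (d : ℝ) ^ ((3 : ℝ) / 2) = d * √d := by
    rw [show (3 : ℝ) / 2 = 1 + 1 / 2 by norm_num, Real.rpow_add (by positivity), Real.rpow_one,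
      Real.sqrt_eq_rpow]
  have hvol_pos : 0 < unitBallVol d := (by positivity : 0 < (2 / √(d : ℝ)) ^ d).trans_le hvol
  have hsqrt_mul : (d : ℝ) ≤ d * √d := le_mul_of_one_le_right (by positivity) hsqrt
  have hlog_three_mul : d * log 3 ≤ d * 2 := by gcongr
  -- `c₁ ≥ 1 + 2d√d ≥ 2d ≥ d log 3`
  rw [c1, hrpow, Real.log_mul (by positivity) hvol_pos.ne',
    Real.log_mul (by positivity) (Real.exp_ne_zero 1), Real.log_exp]
  linarith

theorem mul_log_le_c3 {R δ : ℝ} (hd : 1 ≤ d) (hR : 0 ≤ R) (hδ : 0 < δ) :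
    d * log (2 * ⌊√d * R / δ⌋₊ + 1) ≤ c3 d R δ := by
  have hsqrt : 1 ≤ √(d : ℝ) := Real.one_le_sqrt.mpr (by exact_mod_cast hd)
  have hfloor : (⌊√d * R / δ⌋₊ : ℝ) ≤ √d * R / δ := Nat.floor_le (by positivity)
  rw [c3]
  gcongr
  calc 2 * (⌊√d * R / δ⌋₊ : ℝ) + 1 ≤ 2 * (√d * R / δ) + √d := by linarith
    _ = √d * (2 * R + δ) / δ := by field_simp

theorem floor_mul_log_two_le_c2_mul {δ L : ℝ} (hd : 1 ≤ d) (hδ : 0 < δ) (hL : 0 ≤ L) :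
    ⌊√d * L / δ⌋₊ * log 2 ≤ c2 d δ * L := by
  have hsqrt_le : √(d : ℝ) ≤ d := Real.sqrt_le_self_iff.mpr (Or.inr (by exact_mod_cast hd))
  have hfloor : (⌊√d * L / δ⌋₊ : ℝ) ≤ √d * L / δ := Nat.floor_le (by positivity)
  have hlog_two : log 2 ≤ 1 := by linarith [Real.log_two_lt_d9]
  calc ⌊√d * L / δ⌋₊ * log 2 ≤ √d * L / δ * 1 := by gcongr
    _ ≤ d * L / δ := by rw [mul_one]; gcongr
    _ ≤ c2 d δ * L := by
        rw [c2, add_mul, div_mul_eq_mul_div _ δ L]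
        linarith [(by positivity : 0 ≤ log 2 / (δ * √d) * L)]

end Constants

section GridPaths

variable {d : ℕ} {R δ L : ℝ} {k : ℕ}

def gridPaths (d : ℕ) (R δ L : ℝ) (k : ℕ) : Set (Fin (k + 1) → EuclideanSpace ℝ (Fin d)) :=
  {v | (∀ j, v j ∈ Qgrid d R δ) ∧ ∑ j : Fin k, dist (v j.castSucc) (v j.succ) ≤ L}

theorem Fclass_eq_image_gridPaths : Fclass d R δ L k = PolyLine.mk k '' gridPaths d R δ L k := by
  ext ⟨s, v⟩
  constructor
  · rintro ⟨rfl, hv, hlen⟩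
    exact ⟨v, ⟨hv, hlen⟩, rfl⟩
  · rintro ⟨v, hv, h⟩
    cases h
    exact ⟨rfl, hv⟩

theorem ncard_Fclass : (Fclass d R δ L k).ncard = (gridPaths d R δ L k).ncard := by
  rw [Fclass_eq_image_gridPaths]
  exact Set.ncard_image_of_injective _ fun v w h => by cases h; rfl

theorem floor_div_mul_of_mem_Qgrid {x : EuclideanSpace ℝ (Fin d)} (hx : x ∈ Qgrid d R δ)
    (hδ : δ ≠ 0) (i : Fin d) : (⌊x i / δ⌋ : ℝ) * δ = x i := by
  obtain ⟨n, hn⟩ := hx.2 i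
  rw [hn, mul_div_cancel_right₀ _ hδ, Int.floor_intCast]

theorem natAbs_eq_abs_div_of_mul_eq {n : ℤ} {x : ℝ} (hδ : 0 < δ) (h : n * δ = x) :
    (n.natAbs : ℝ) = |x| / δ := by
  rw [← h, abs_mul, abs_of_pos hδ, mul_div_cancel_right₀ _ hδ.ne', Nat.cast_natAbs, Int.cast_abs]

theorem injective_zero_and_increments {G : Type*} [AddGroup G] :
    Function.Injective fun z : Fin (k + 1) → G =>
      (z 0, fun j : Fin k => z j.succ - z j.castSucc) := by
  intro z w h
  simp only [Prod.mk.injEq, funext_iff] at h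
  funext j
  induction j using Fin.induction with
  | zero => exact h.1
  | succ j ih => rw [← sub_add_cancel (z j.succ), h.2 j, ih, sub_add_cancel]

def gridCode (δ : ℝ) (v : Fin (k + 1) → EuclideanSpace ℝ (Fin d)) :
    (Fin d → ℤ) × (Fin k × Fin d → ℤ) :=
  (fun i => ⌊v 0 i / δ⌋, fun ji => ⌊v ji.1.succ ji.2 / δ⌋ - ⌊v ji.1.castSucc ji.2 / δ⌋)

theorem injOn_gridCode (hδ : δ ≠ 0) : Set.InjOn (gridCode δ) (gridPaths d R δ L k) := by
  intro v hv w hw h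
  simp only [gridCode, Prod.mk.injEq, funext_iff] at h
  have hfloor : (fun j i => ⌊v j i / δ⌋) = fun j i => ⌊w j i / δ⌋ :=
    injective_zero_and_increments <|
      Prod.ext (funext h.1) (funext fun j => funext fun i => h.2 (j, i))
  funext j
  ext i
  rw [← floor_div_mul_of_mem_Qgrid (hv.1 j) hδ, ← floor_div_mul_of_mem_Qgrid (hw.1 j) hδ,
    congrFun (congrFun hfloor j) i]

theorem gridCode_mem (hδ : 0 < δ) {v : Fin (k + 1) → EuclideanSpace ℝ (Fin d)}
    (hv : v ∈ gridPaths d R δ L k) :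
    gridCode δ v ∈ Fintype.piFinset (fun _ : Fin d => Icc (-(⌊√d * R / δ⌋₊ : ℤ)) ⌊√d * R / δ⌋₊)
      ×ˢ l1Ball (Fin k × Fin d) ⌊√d * L / δ⌋₊ := by
  refine mem_product.mpr ⟨Fintype.mem_piFinset.mpr fun i => ?_, mem_l1Ball.mpr ?_⟩
  · show ⌊v 0 i / δ⌋ ∈ _
    have : (⌊v 0 i / δ⌋).natAbs ≤ ⌊√d * R / δ⌋₊ := by
      refine Nat.le_floor ?_
      rw [natAbs_eq_abs_div_of_mul_eq hδ (floor_div_mul_of_mem_Qgrid (hv.1 0) hδ.ne' i)]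
      gcongr
      calc |v 0 i| ≤ ‖v 0‖ := by simpa using PiLp.norm_apply_le (v 0) i
        _ ≤ √d * R := mem_closedBall_zero_iff.mp (hv.1 0).1
    exact mem_Icc.mpr ⟨by omega, by omega⟩
  · have hinc : ∀ ji : Fin k × Fin d,
        ((⌊v ji.1.succ ji.2 / δ⌋ - ⌊v ji.1.castSucc ji.2 / δ⌋ : ℤ) : ℝ) * δ
          = (v ji.1.succ - v ji.1.castSucc) ji.2 := fun ji => by
      rw [Int.cast_sub, sub_mul, floor_div_mul_of_mem_Qgrid (hv.1 _) hδ.ne',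
        floor_div_mul_of_mem_Qgrid (hv.1 _) hδ.ne', PiLp.sub_apply]
    refine Nat.le_floor ?_
    rw [Nat.cast_sum]
    simp only [gridCode, natAbs_eq_abs_div_of_mul_eq hδ (hinc _)]
    calc ∑ ji : Fin k × Fin d, |(v ji.1.succ - v ji.1.castSucc) ji.2| / δ
        = (∑ j : Fin k, ∑ i, |(v j.succ - v j.castSucc) i|) / δ := by
          rw [Fintype.sum_prod_type, sum_div]
          simp only [sum_div]
      _ ≤ (∑ j : Fin k, √d * dist (v j.castSucc) (v j.succ)) / δ := by
          gcongr with j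
          rw [dist_comm, dist_eq_norm]
          simpa using sum_abs_le_sqrt_card_mul_norm (v j.succ - v j.castSucc)
      _ ≤ √d * L / δ := by
          rw [← mul_sum]
          gcongr
          exact hv.2

theorem ncard_gridPaths_le (hδ : 0 < δ) :
    (gridPaths d R δ L k).ncard
      ≤ (2 * ⌊√d * R / δ⌋₊ + 1) ^ d * #(l1Ball (Fin k × Fin d) ⌊√d * L / δ⌋₊) := by
  have := Set.ncard_le_ncard_of_injOn (s := gridPaths d R δ L k) (gridCode δ)
    (fun v hv => gridCode_mem hδ hv) (injOn_gridCode hδ.ne') (finite_toSet _)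
  rw [Set.ncard_coe_finset, card_product, Fintype.card_piFinset, prod_const, card_univ,
    Fintype.card_fin, Int.card_Icc] at this
  convert this using 3
  omega

end GridPaths

theorem log_natCast_le_log_natCast {m n : ℕ} (h : m ≤ n) : log (m : ℝ) ≤ log n := by
  rcases m.eq_zero_or_pos with rfl | hm
  · simpa using Real.log_natCast_nonneg n
  · exact Real.log_le_log (by exact_mod_cast hm) (by exact_mod_cast h)

theorem sep_segs_Fp_eq_Fclass {d p : ℕ} {R δ L : ℝ} {k : ℕ} (hk : k ∈ Finset.Icc 1 p) :
    {f ∈ Fp d p R δ L | f.segs = k} = Fclass d R δ L k := by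
  ext f
  simp only [Fp, Set.mem_iUnion, exists_prop]
  constructor
  · rintro ⟨⟨k', -, hf⟩, rfl⟩
    rwa [hf.1]
  · exact fun hf => ⟨⟨k, hk, hf⟩, hf.1⟩

/-- **Lemma 3.** Control of the cardinality of the set of polygonal lines of `F_p`
having exactly `k` segments: `ln |{f ∈ F_p : K(f) = k}| ≤ c₁k + c₂L + c₃`. -/
theorem lemma3
    (d p : ℕ) (hd : 1 ≤ d) (hp : 1 ≤ p)
    (R δ L : ℝ) (hR : 0 < R) (hδ : 0 < δ) (hL : 0 < L) :
    ∀ k ∈ Finset.Icc 1 p,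
      Real.log (({f ∈ Fp d p R δ L | f.segs = k} : Set (PolyLine d)).ncard)
        ≤ c1 d p * k + c2 d δ * L + c3 d R δ := by
  intro k hk
  set N := ⌊√d * R / δ⌋₊
  set M := ⌊√d * L / δ⌋₊
  have hcount : ({f ∈ Fp d p R δ L | f.segs = k} : Set (PolyLine d)).ncard
      ≤ (2 * N + 1) ^ d * (2 ^ M * 3 ^ (k * d)) := by
    rw [sep_segs_Fp_eq_Fclass hk, ncard_Fclass]
    refine (ncard_gridPaths_le hδ).trans (Nat.mul_le_mul_left _ ?_)
    simpa using card_l1Ball_le (Fin k × Fin d) M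
  refine (log_natCast_le_log_natCast hcount).trans ?_
  calc log (((2 * N + 1) ^ d * (2 ^ M * 3 ^ (k * d)) : ℕ) : ℝ)
      = d * log (2 * N + 1) + M * log 2 + k * (d * log 3) := by
        push_cast
        rw [Real.log_mul (by positivity) (by positivity),
          Real.log_mul (by positivity) (by positivity), Real.log_pow, Real.log_pow, Real.log_pow]
        push_cast
        ring
    _ ≤ c3 d R δ + c2 d δ * L + k * c1 d p := by
        gcongr ?_ + ?_ + _ * ?_
        · exact mul_log_le_c3 hd hR.le hδ
        · exact floor_mul_log_two_le_c2_mul hd hδ hL.le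
        · exact mul_log_three_le_c1 hd hp
    _ = c1 d p * k + c2 d δ * L + c3 d R δ := by ring

end SLPC
end
end

section
/- (Expected maximum of penalized exponential perturbations) Let F be a nonempty finite set, h : F → [0,∞), and let (Z_f)_{f ∈ F} be independent random variables each with the standard exponential distribution. Set u = Σ_{f ∈ F} e^{−h(f)}. Then E[ sup_{f ∈ F} ( Z_f − h(f) ) ] ≤ 1 + ln u. -/
/-!
With `L = log u`, a union bound over `f` gives
`P(sup_f (Z_f - h f) > L + t) ≤ ∑_f e^{-(L + t + h f)} = e^{-t}`, so by the layer-cake formula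
`E[(sup_f (Z_f - h f) - L)⁺] ≤ ∫₀^∞ e^{-t} dt = 1`.
-/

open MeasureTheory ProbabilityTheory Real ENNReal

noncomputable section

namespace SLPC

lemma expMeasure_Ioi {r : ℝ} (hr : 0 ≤ r) :
    expMeasure (Set.Ioi r) = ENNReal.ofReal (exp (-r)) := by
  rw [expMeasure, withDensity_apply _ measurableSet_Ioi,
    setLIntegral_congr_fun measurableSet_Ioi fun z hz => by
      rw [if_pos (hr.trans_lt hz)],
    ← ofReal_integral_eq_lintegral_ofReal (integrableOn_exp_neg_Ioi r)
      (Filter.Eventually.of_forall fun z => (exp_pos _).le),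
    integral_exp_neg_Ioi]

lemma integrable_id_expMeasure : Integrable id expMeasure := by
  have hdens : Measurable fun z : ℝ => ENNReal.ofReal (if 0 < z then exp (-z) else 0) :=
    (Measurable.ite measurableSet_Ioi (by fun_prop) measurable_const).ennreal_ofReal
  rw [expMeasure, integrable_withDensity_iff hdens
    (Filter.Eventually.of_forall fun _ => ofReal_lt_top)]
  have hGamma : IntegrableOn (fun z : ℝ => exp (-z) * z) (Set.Ioi 0) := by
    simpa [show (2 : ℝ) - 1 = 1 by norm_num] using GammaIntegral_convergent (s := 2) (by norm_num)
  refine (integrable_indicator_iff measurableSet_Ioi).2 hGamma |>.congr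
    (Filter.Eventually.of_forall fun z => ?_)
  by_cases hz : 0 < z
  · simp [hz, (exp_pos _).le, mul_comm]
  · simp [hz]

section Tails

variable {Ω : Type*} [MeasurableSpace Ω] {μ : Measure Ω}

lemma measure_lt_le_exp_neg [IsProbabilityMeasure μ] {Z : Ω → ℝ} (hZ : Measurable Z)
    (hdist : μ.map Z = expMeasure) (r : ℝ) :
    μ {ω | r < Z ω} ≤ ENNReal.ofReal (exp (-r)) := by
  rcases le_or_gt 0 r with hr | hr
  · rw [← expMeasure_Ioi hr, ← hdist, Measure.map_apply hZ measurableSet_Ioi]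
    rfl
  · exact prob_le_one.trans (ENNReal.one_le_ofReal.2 (one_le_exp (by linarith)))

lemma integrable_of_map_eq_expMeasure {Z : Ω → ℝ} (hZ : Measurable Z)
    (hdist : μ.map Z = expMeasure) : Integrable Z μ :=
  (integrable_map_measure aestronglyMeasurable_id hZ.aemeasurable).1
    (hdist ▸ integrable_id_expMeasure)

lemma integrable_ciSup {ι : Type*} [Fintype ι] [Nonempty ι] {X : ι → Ω → ℝ}
    (hX : ∀ i, Integrable (X i) μ) : Integrable (fun ω => ⨆ i, X i ω) μ := by
  have hsup : Integrable (Finset.univ.sup' Finset.univ_nonempty X) μ :=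
    Finset.sup'_induction (p := fun g => Integrable g μ) _ _ (fun _ h₁ _ h₂ => h₁.sup h₂)
      fun i _ => hX i
  rwa [Finset.sup'_univ_eq_ciSup, show (⨆ i, X i) = fun ω => ⨆ i, X i ω from
    funext fun _ => iSup_apply] at hsup

lemma measure_lt_ciSup_le_sum {ι : Type*} [Fintype ι] [Nonempty ι] (X : ι → Ω → ℝ) (s : ℝ) :
    μ {ω | s < ⨆ i, X i ω} ≤ ∑ i, μ {ω | s < X i ω} :=
  calc μ {ω | s < ⨆ i, X i ω} ≤ μ (⋃ i, {ω | s < X i ω}) :=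
        measure_mono fun ω (hω : s < ⨆ i, X i ω) =>
          Set.mem_iUnion.2 ((lt_ciSup_iff (Set.finite_range _).bddAbove).1 hω)
    _ ≤ ∑ i, μ {ω | s < X i ω} := measure_iUnion_fintype_le μ _

lemma integral_le_add_one_of_tail_le_exp_neg [IsProbabilityMeasure μ] {X : Ω → ℝ}
    (hX : Integrable X μ) (L : ℝ)
    (htail : ∀ t > 0, μ {ω | L + t < X ω} ≤ ENNReal.ofReal (exp (-t))) :
    ∫ ω, X ω ∂μ ≤ L + 1 := by
  have hXL : Integrable (fun ω => X ω - L) μ := hX.sub (integrable_const L)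
  have hpos : ∫ ω, max (X ω - L) 0 ∂μ ≤ 1 := by
    rw [hXL.pos_part.integral_eq_integral_meas_lt
      (Filter.Eventually.of_forall fun _ => le_max_right _ _), ← integral_exp_neg_Ioi_zero]
    refine integral_mono_of_nonneg (Filter.Eventually.of_forall fun _ => measureReal_nonneg)
      (integrableOn_exp_neg_Ioi 0) ((ae_restrict_iff' measurableSet_Ioi).2
        (Filter.Eventually.of_forall fun t (ht : 0 < t) => ?_))
    have hset : {ω | t < max (X ω - L) 0} = {ω | L + t < X ω} := by
      ext ω
      simp only [Set.mem_ofPred_eq, lt_max_iff, ht.not_gt, or_false]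
      constructor <;> intro <;> linarith
    show μ.real {ω | t < max (X ω - L) 0} ≤ exp (-t)
    rw [hset, measureReal_def]
    exact ENNReal.toReal_le_of_le_ofReal (exp_pos _).le (htail t ht)
  calc ∫ ω, X ω ∂μ = L + ∫ ω, X ω - L ∂μ := by
        rw [integral_sub hX (integrable_const L)]
        simp
    _ ≤ L + ∫ ω, max (X ω - L) 0 ∂μ :=
        add_le_add_right (integral_mono hXL hXL.pos_part fun _ => le_max_left _ _) L
    _ ≤ L + 1 := by linarith

end Tails

lemma sum_exp_neg_log_sum_exp_add {F : Type*} [Fintype F] [Nonempty F] (h : F → ℝ) (t : ℝ) :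
    ∑ f, exp (-(log (∑ g, exp (-h g)) + t + h f)) = exp (-t) := by
  have hu : 0 < ∑ g, exp (-h g) := Finset.sum_pos (fun g _ => exp_pos _) Finset.univ_nonempty
  simp_rw [neg_add, exp_add, exp_neg (log _), exp_log hu, ← Finset.mul_sum]
  field_simp

theorem exp_sup_expectation_general
    (F : Type*) [Fintype F] [Nonempty F]
    (h : F → ℝ)
    (Ω : Type*) [MeasurableSpace Ω] (P : Measure Ω) [IsProbabilityMeasure P]
    (Z : F → Ω → ℝ) (hmeas : ∀ f, Measurable (Z f))
    (hdist : ∀ f, Measure.map (Z f) P = expMeasure) :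
    ∫ ω, (⨆ f, (Z f ω - h f)) ∂P ≤ 1 + Real.log (∑ f, Real.exp (-(h f))) := by
  set L := log (∑ f, exp (-h f))
  have hint : Integrable (fun ω => ⨆ f, Z f ω - h f) P := integrable_ciSup fun f =>
    (integrable_of_map_eq_expMeasure (hmeas f) (hdist f)).sub (integrable_const _)
  rw [add_comm]
  refine integral_le_add_one_of_tail_le_exp_neg hint L fun t _ => ?_
  calc P {ω | L + t < ⨆ f, Z f ω - h f} ≤ ∑ f, P {ω | L + t < Z f ω - h f} :=
        measure_lt_ciSup_le_sum _ _
    _ ≤ ∑ f, ENNReal.ofReal (exp (-(L + t + h f))) := Finset.sum_le_sum fun f _ => by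
        simpa only [lt_sub_iff_add_lt] using measure_lt_le_exp_neg (hmeas f) (hdist f) _
    _ = ENNReal.ofReal (exp (-t)) := by
        rw [← ENNReal.ofReal_sum_of_nonneg fun f _ => (exp_pos _).le, sum_exp_neg_log_sum_exp_add]

/-- **Expected maximum of penalized exponential perturbations.** If `(Z_f)_{f ∈ F}` are
independent standard exponential random variables and `u = ∑_f e^{-h(f)}`, then
`E[sup_f (Z_f - h(f))] ≤ 1 + ln u`. -/
theorem exp_sup_expectation
    (F : Type*) [Fintype F] [Nonempty F]
    (h : F → ℝ) (hh : ∀ f, 0 ≤ h f)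
    (Ω : Type*) [MeasurableSpace Ω] (P : Measure Ω) [IsProbabilityMeasure P]
    (Z : F → Ω → ℝ) (hmeas : ∀ f, Measurable (Z f))
    (hdist : ∀ f, Measure.map (Z f) P = expMeasure)
    (hindep : iIndepFun Z P) :
    ∫ ω, (⨆ f, (Z f ω - h f)) ∂P ≤ 1 + Real.log (∑ f, Real.exp (-(h f))) :=
  exp_sup_expectation_general F h Ω P Z hmeas hdist

end SLPC
end
end

section
/- (Almost-sure regret chain for the future-peeking forecaster) In Procedure 2 with nonincreasing positive step sizes η₀ ≥ η₁ ≥ … ≥ η_T (with the convention 1/η_{−1} = 0), define f̂*_t = argmin_{f ∈ F_p} Σ_{s=0}^{t} Δ_{f,s} for t = 0,…,T and f* = argmin_{f ∈ F_p} { Σ_{t=1}^T Δ(f, x_t) + h(f)/η_T }. Then, for every realization of the perturbations (π-almost surely), Σ_{t=1}^T Δ(f̂*_t, x_t) ≤ inf_{f ∈ F_p} { Σ_{t=1}^T Δ(f, x_t) + h(f)/η_T } − z_{f*}/η_T + Σ_{t=0}^T (1/η_{t−1} − 1/η_t)·( h(f̂*_t) − z_{f̂*_t} ). -/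
open MeasureTheory ProbabilityTheory Real

noncomputable section

namespace SLPC

/-- The instantaneous (perturbed) loss `Δ_{f,t}` of Procedure 2:
`Δ_{f,0} = (1/η₀)(h(f) - z_f)` and, for `t ≥ 1`,
`Δ_{f,t} = Δ(f, x_t) + (1/η_t - 1/η_{t-1})(h(f) - z_f)`. -/
def stepLoss {d : ℕ} (x : ℕ → EuclideanSpace ℝ (Fin d)) (h : PolyLine d → ℝ) (η : ℕ → ℝ)
    (zf : ℝ) (f : PolyLine d) : ℕ → ℝ
  | 0 => (1 / η 0) * (h f - zf)
  | (t + 1) => sqLoss f (x (t + 1)) + (1 / η (t + 1) - 1 / η t) * (h f - zf)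

/-- **Almost-sure regret chain for the future-peeking forecaster.** For every realization
of the perturbations, with nonincreasing step sizes (and the convention `1/η_{-1} = 0`),
`∑_{t=1}^T Δ(f̂*_t, x_t) ≤ inf_{f ∈ F_p} {∑_t Δ(f,x_t) + h(f)/η_T} - z_{f*}/η_T
  + ∑_{t=0}^T (1/η_{t-1} - 1/η_t)(h(f̂*_t) - z_{f̂*_t})`. -/
theorem as_regret_chain
    (d p T : ℕ) (hd : 1 ≤ d) (hp : 1 ≤ p) (hT : 1 ≤ T)
    (R δ L : ℝ) (hR : 0 < R) (hδ : 0 < δ) (hL : 0 < L)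
    (x : ℕ → EuclideanSpace ℝ (Fin d))
    (hx : ∀ t ∈ Finset.Icc 1 T,
      x t ∈ Metric.closedBall (0 : EuclideanSpace ℝ (Fin d)) (Real.sqrt d * R))
    (h : PolyLine d → ℝ) (hh : ∀ f ∈ Fp d p R δ L, 0 ≤ h f)
    (η : ℕ → ℝ) (hηpos : ∀ t, t ≤ T → 0 < η t)
    (hηmono : ∀ s t : ℕ, s ≤ t → t ≤ T → η t ≤ η s)
    (z : PolyLine d → ℝ)
    (fstar : ℕ → PolyLine d)
    (hmem : ∀ t, t ≤ T → fstar t ∈ Fp d p R δ L)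
    (hargmin : ∀ t, t ≤ T → ∀ g ∈ Fp d p R δ L,
      ∑ s ∈ Finset.range (t + 1), stepLoss x h η (z (fstar t)) (fstar t) s
        ≤ ∑ s ∈ Finset.range (t + 1), stepLoss x h η (z g) g s)
    (fbest : PolyLine d) (hbestmem : fbest ∈ Fp d p R δ L)
    (hbest : ∀ g ∈ Fp d p R δ L,
      (∑ t ∈ Finset.Icc 1 T, sqLoss fbest (x t)) + h fbest / η T
        ≤ (∑ t ∈ Finset.Icc 1 T, sqLoss g (x t)) + h g / η T) :
    ∑ t ∈ Finset.Icc 1 T, sqLoss (fstar t) (x t)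
      ≤ sInf {v : ℝ | ∃ f ∈ Fp d p R δ L,
            v = (∑ t ∈ Finset.Icc 1 T, sqLoss f (x t)) + h f / η T}
        - z fbest / η T
        + ∑ t ∈ Finset.range (T + 1),
            ((if t = 0 then 0 else 1 / η (t - 1)) - 1 / η t) *
              (h (fstar t) - z (fstar t)) := by
  have hηT : η T ≠ 0 := ne_of_gt (hηpos T le_rfl)
  -- telescoping identity for cumulative step losses
  have tele : ∀ (f : PolyLine d) (zf : ℝ) (t : ℕ),
      ∑ s ∈ Finset.range (t + 1), stepLoss x h η zf f s
        = (∑ s ∈ Finset.Icc 1 t, sqLoss f (x s)) + (1 / η t) * (h f - zf) := by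
    intro f zf t
    induction t with
    | zero => simp [stepLoss]
    | succ t ih =>
      rw [Finset.sum_range_succ, ih, Finset.sum_Icc_succ_top (by omega : 1 ≤ t + 1)]
      simp only [stepLoss]
      ring
  -- be-the-leader induction
  have BTL : ∀ t, t ≤ T →
      ∑ s ∈ Finset.range (t + 1), stepLoss x h η (z (fstar s)) (fstar s) s
        ≤ ∑ s ∈ Finset.range (t + 1), stepLoss x h η (z (fstar t)) (fstar t) s := by
    intro t
    induction t with
    | zero => intro _; exact le_refl _
    | succ t ih =>
      intro hle
      have ht : t ≤ T := by omega
      have h1 := ih ht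
      have h2 := hargmin t ht (fstar (t + 1)) (hmem (t + 1) hle)
      calc ∑ s ∈ Finset.range (t + 1 + 1), stepLoss x h η (z (fstar s)) (fstar s) s
          = (∑ s ∈ Finset.range (t + 1), stepLoss x h η (z (fstar s)) (fstar s) s)
            + stepLoss x h η (z (fstar (t + 1))) (fstar (t + 1)) (t + 1) :=
            Finset.sum_range_succ _ _
        _ ≤ (∑ s ∈ Finset.range (t + 1), stepLoss x h η (z (fstar (t + 1))) (fstar (t + 1)) s)
            + stepLoss x h η (z (fstar (t + 1))) (fstar (t + 1)) (t + 1) := by linarith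
        _ = ∑ s ∈ Finset.range (t + 1 + 1), stepLoss x h η (z (fstar (t + 1))) (fstar (t + 1)) s :=
            (Finset.sum_range_succ _ _).symm
  -- split range (T+1) as {0} ∪ Icc 1 T
  have hsplit : Finset.range (T + 1) = insert 0 (Finset.Icc 1 T) := by
    ext n; simp only [Finset.mem_range, Finset.mem_insert, Finset.mem_Icc]; omega
  have h0 : (0 : ℕ) ∉ Finset.Icc 1 T := by simp
  -- sum identity relating the realized losses to squared losses and penalties
  have hsum : ∑ t ∈ Finset.Icc 1 T, sqLoss (fstar t) (x t)
      = (∑ s ∈ Finset.range (T + 1), stepLoss x h η (z (fstar s)) (fstar s) s)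
        + ∑ t ∈ Finset.range (T + 1),
            ((if t = 0 then 0 else 1 / η (t - 1)) - 1 / η t) * (h (fstar t) - z (fstar t)) := by
    rw [hsplit, Finset.sum_insert h0, Finset.sum_insert h0]
    have hterm : ∀ t ∈ Finset.Icc 1 T,
        stepLoss x h η (z (fstar t)) (fstar t) t
          + ((if t = 0 then 0 else 1 / η (t - 1)) - 1 / η t) * (h (fstar t) - z (fstar t))
        = sqLoss (fstar t) (x t) := by
      intro t ht
      have h1t : 1 ≤ t := (Finset.mem_Icc.mp ht).1
      cases t with
      | zero => omega
      | succ s =>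
        simp only [stepLoss, Nat.succ_ne_zero, if_false, Nat.add_sub_cancel]
        ring
    have := Finset.sum_congr rfl hterm
    rw [Finset.sum_add_distrib] at this
    have hl0 : stepLoss x h η (z (fstar 0)) (fstar 0) 0
        = (1 / η 0) * (h (fstar 0) - z (fstar 0)) := rfl
    rw [hl0, if_pos rfl]
    linear_combination -this
  -- sInf equals the value at fbest
  have hval : ((∑ t ∈ Finset.Icc 1 T, sqLoss fbest (x t)) + h fbest / η T) ∈
      {v : ℝ | ∃ f ∈ Fp d p R δ L,
        v = (∑ t ∈ Finset.Icc 1 T, sqLoss f (x t)) + h f / η T} := ⟨fbest, hbestmem, rfl⟩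
  have hlb : ∀ v ∈ {v : ℝ | ∃ f ∈ Fp d p R δ L,
      v = (∑ t ∈ Finset.Icc 1 T, sqLoss f (x t)) + h f / η T},
      (∑ t ∈ Finset.Icc 1 T, sqLoss fbest (x t)) + h fbest / η T ≤ v := by
    rintro v ⟨g, hg, rfl⟩; exact hbest g hg
  have hsInf : sInf {v : ℝ | ∃ f ∈ Fp d p R δ L,
        v = (∑ t ∈ Finset.Icc 1 T, sqLoss f (x t)) + h f / η T}
      = (∑ t ∈ Finset.Icc 1 T, sqLoss fbest (x t)) + h fbest / η T :=
    le_antisymm (csInf_le ⟨_, hlb⟩ hval) (le_csInf ⟨_, hval⟩ hlb)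
  -- chain the inequalities
  have hBTL := BTL T le_rfl
  have hcmp := hargmin T le_rfl fbest hbestmem
  rw [tele (fstar T) (z (fstar T)) T] at hcmp
  rw [tele fbest (z fbest) T] at hcmp
  rw [tele (fstar T) (z (fstar T)) T] at hBTL
  have hdiv : (1 / η T) * (h fbest - z fbest) = h fbest / η T - z fbest / η T := by
    field_simp
  rw [hsInf]
  linarith [hsum, hBTL, hcmp]

end SLPC
end
end
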